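/- arXiv:2603.13623 — 2 statements merged into one kernel-verified Lean document; each statement's English description precedes it below -/
import Mathlib

section
/- Let λ ∈ ℝ and let g : ℝ → M_n(ℝ) be a differentiable matrix function with g(ξ) symmetric for all ξ and satisfying g'(ξ) = J_n(λ)·g(ξ). Then there exist constants C₁, …, C_n ∈ ℝ such that g(ξ) is the Hankel matrix with entries X_i(ξ) = e^{λξ} ∑_{j=0}^{n−i} (ξ^j / j!) C_{i+j} on the antidiagonals, i.e., g(ξ)_{kl} = X_{k+l−1}(ξ) for k+l ≤ n+1 and 0 otherwise. -/
/-!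
Symmetry of `g` and of `g' = J g` gives `J g = g Jᵀ`, i.e. `g (i+1) j = g i (j+1)` (entries outside
the matrix read as `0`), so `g ξ` is a Hankel matrix whose antidiagonals are filled by the
entries `X_s = g 0 s` of its first row. These satisfy `X_s' = λ X_s + X_{s+1}` with `X_s = 0` for
`s ≥ n`; for `Y_s = e^{-λξ} X_s` this reads `Y_s' = Y_{s+1}`, so by downward induction on `s`
each `Y_s` is the Taylor polynomial `∑_j ξ^j/j! Y_{s+j}(0)`.
-/

/-- The `n × n` Jordan cell with eigenvalue `l`. -/
def JordanCell (n : ℕ) (l : ℝ) : Matrix (Fin n) (Fin n) ℝ :=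
  Matrix.of fun i j => if i = j then l else if (i : ℕ) + 1 = (j : ℕ) then 1 else 0

open Finset Nat

namespace Matrix

variable {R : Type*} [Zero R] {n : ℕ}

/-- The entries of `A` indexed by `ℕ × ℕ`, padded by zeros, so that index shifts need no
boundary cases. -/
def natEntry (A : Matrix (Fin n) (Fin n) R) (i j : ℕ) : R :=
  if h : i < n ∧ j < n then A ⟨i, h.1⟩ ⟨j, h.2⟩ else 0

theorem natEntry_of_lt (A : Matrix (Fin n) (Fin n) R) {i j : ℕ} (hi : i < n) (hj : j < n) :
    A.natEntry i j = A ⟨i, hi⟩ ⟨j, hj⟩ :=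
  dif_pos ⟨hi, hj⟩

@[simp]
theorem natEntry_val (A : Matrix (Fin n) (Fin n) R) (i j : Fin n) :
    A.natEntry i j = A i j :=
  natEntry_of_lt A i.isLt j.isLt

theorem natEntry_of_le_left (A : Matrix (Fin n) (Fin n) R) {i : ℕ} (hi : n ≤ i) (j : ℕ) :
    A.natEntry i j = 0 :=
  dif_neg fun h => (h.1.trans_le hi).false

theorem natEntry_of_le_right (A : Matrix (Fin n) (Fin n) R) (i : ℕ) {j : ℕ} (hj : n ≤ j) :
    A.natEntry i j = 0 :=
  dif_neg fun h => (h.2.trans_le hj).false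

theorem natEntry_transpose (A : Matrix (Fin n) (Fin n) R) (i j : ℕ) :
    Aᵀ.natEntry i j = A.natEntry j i := by
  unfold natEntry
  by_cases h : i < n ∧ j < n
  · rw [dif_pos h, dif_pos h.symm, transpose_apply]
  · rw [dif_neg h, dif_neg (mt And.symm h)]

theorem natEntry_comm_of_isSymm {A : Matrix (Fin n) (Fin n) R} (hA : A.IsSymm) (i j : ℕ) :
    A.natEntry i j = A.natEntry j i := by
  rw [← natEntry_transpose, hA.eq]

theorem sum_ite_val_eq_natEntry {R : Type*} [AddCommMonoid R] {n : ℕ}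
    (A : Matrix (Fin n) (Fin n) R) (i : ℕ) (j : Fin n) :
    ∑ k : Fin n, (if i = (k : ℕ) then A k j else 0) = A.natEntry i j := by
  by_cases hi : i < n
  · rw [Finset.sum_eq_single ⟨i, hi⟩ (fun k _ hk => if_neg fun h => hk (Fin.ext h.symm))
      (by simp), if_pos rfl, natEntry_of_lt A hi j.isLt]
  · rw [natEntry_of_le_left A (not_lt.1 hi)]
    exact Finset.sum_eq_zero fun k _ => if_neg fun h : i = k => hi (h ▸ k.isLt)

end Matrix

open Matrix

theorem jordanCell_mul_apply {n : ℕ} (l : ℝ) (A : Matrix (Fin n) (Fin n) ℝ) (i j : Fin n) :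
    (JordanCell n l * A) i j = l * A i j + A.natEntry (i + 1) j := by
  have hJ : ∀ k, JordanCell n l i k * A k j =
      (if i = k then l * A k j else 0) + (if (i : ℕ) + 1 = k then A k j else 0) := by
    intro k
    by_cases hik : i = k
    · subst hik; simp [JordanCell]
    · simp [JordanCell, hik]
  rw [mul_apply, Finset.sum_congr rfl fun k _ => hJ k, Finset.sum_add_distrib,
    sum_ite_val_eq_natEntry, Fintype.sum_ite_eq]

theorem natEntry_jordanCell_mul {n : ℕ} (l : ℝ) (A : Matrix (Fin n) (Fin n) ℝ) (i j : ℕ) :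
    (JordanCell n l * A).natEntry i j = l * A.natEntry i j + A.natEntry (i + 1) j := by
  by_cases h : i < n ∧ j < n
  · simp only [natEntry_of_lt _ h.1 h.2, jordanCell_mul_apply]
  · rcases not_and_or.1 h with hi | hj
    · have hi : n ≤ i := not_lt.1 hi
      simp [natEntry_of_le_left _ hi, natEntry_of_le_left _ (Nat.le_succ_of_le hi)]
    · simp [natEntry_of_le_right _ _ (not_lt.1 hj)]

theorem natEntry_succ_left_eq_succ_right {n : ℕ} {l : ℝ} {A : Matrix (Fin n) (Fin n) ℝ}
    (hA : A.IsSymm) (hJA : (JordanCell n l * A).IsSymm) (i j : ℕ) :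
    A.natEntry (i + 1) j = A.natEntry i (j + 1) := by
  have h := natEntry_comm_of_isSymm hJA i j
  rw [natEntry_jordanCell_mul, natEntry_jordanCell_mul, natEntry_comm_of_isSymm hA j i] at h
  rw [add_left_cancel h, natEntry_comm_of_isSymm hA]

theorem apply_eq_apply_zero_add {α : Type*} {f : ℕ → ℕ → α}
    (h : ∀ i j, f (i + 1) j = f i (j + 1)) (i j : ℕ) : f i j = f 0 (i + j) := by
  induction i generalizing j with
  | zero => rw [zero_add]
  | succ i ih => rw [h, ih, Nat.succ_add_eq_add_succ]

theorem Matrix.isSymm_of_hasDerivAt {𝕜 ι : Type*} [NontriviallyNormedField 𝕜]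
    {g : 𝕜 → Matrix ι ι 𝕜} {g' : Matrix ι ι 𝕜} {ξ : 𝕜} (hg : ∀ t, (g t).IsSymm)
    (hd : ∀ i j, HasDerivAt (fun t => g t i j) (g' i j) ξ) : g'.IsSymm :=
  Matrix.IsSymm.ext fun i j => (hd j i).unique <| by simpa only [(hg _).apply] using hd i j

theorem Matrix.hasDerivAt_natEntry {𝕜 F : Type*} [NontriviallyNormedField 𝕜]
    [NormedAddCommGroup F] [NormedSpace 𝕜 F] {n : ℕ} {g : 𝕜 → Matrix (Fin n) (Fin n) F}
    {g' : Matrix (Fin n) (Fin n) F} {ξ : 𝕜}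
    (hd : ∀ i j, HasDerivAt (fun t => g t i j) (g' i j) ξ) (i j : ℕ) :
    HasDerivAt (fun t => (g t).natEntry i j) (g'.natEntry i j) ξ := by
  by_cases h : i < n ∧ j < n
  · simpa only [natEntry_of_lt _ h.1 h.2] using hd ⟨i, h.1⟩ ⟨j, h.2⟩
  · simpa only [natEntry, dif_neg h] using hasDerivAt_const ξ (0 : F)

theorem hasDerivAt_sum_pow_div_factorial_mul (m : ℕ) (c : ℕ → ℝ) (t : ℝ) :
    HasDerivAt (fun x : ℝ => ∑ j ∈ range m, x ^ j / j ! * c j)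
      (∑ j ∈ range (m - 1), t ^ j / j ! * c (j + 1)) t := by
  refine (HasDerivAt.fun_sum fun j (_ : j ∈ range m) =>
    ((hasDerivAt_pow j t).div_const (j ! : ℝ)).mul_const (c j)).congr_deriv ?_
  cases m with
  | zero => simp
  | succ m =>
    rw [sum_range_succ', Nat.add_sub_cancel]
    simp only [Nat.cast_zero, zero_mul, zero_div, add_zero, Nat.factorial_succ]
    refine sum_congr rfl fun j _ => ?_
    push_cast
    field_simp

theorem eq_sum_of_hasDerivAt_succ {n : ℕ} {Y : ℕ → ℝ → ℝ}
    (hY : ∀ s ξ, HasDerivAt (Y s) (Y (s + 1) ξ) ξ) (hvanish : ∀ s ξ, n ≤ s → Y s ξ = 0) (s : ℕ)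
    (ξ : ℝ) : Y s ξ = ∑ j ∈ range (n - s), ξ ^ j / j ! * Y (s + j) 0 := by
  induction hk : n - s generalizing s ξ with
  | zero => rw [sum_range_zero, hvanish s ξ (by omega)]
  | succ k ih =>
    have hP : ∀ t, HasDerivAt (fun x => ∑ j ∈ range (k + 1), x ^ j / j ! * Y (s + j) 0)
        (Y (s + 1) t) t := by
      intro t
      convert hasDerivAt_sum_pow_div_factorial_mul (k + 1) (fun j => Y (s + j) 0) t using 1
      simp only [ih (s + 1) t (by omega), Nat.add_sub_cancel, add_assoc, add_comm 1]
    have hP0 : ∑ j ∈ range (k + 1), (0 : ℝ) ^ j / j ! * Y (s + j) 0 = Y s 0 := by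
      simp [sum_range_succ']
    refine congrFun (eq_of_fderiv_eq (fun x => (hY s x).differentiableAt)
      (fun x => (hP x).differentiableAt) (fun x => ?_) 0 hP0.symm) ξ
    rw [(hY s x).hasFDerivAt.fderiv, (hP x).hasFDerivAt.fderiv]

theorem eq_exp_mul_sum_of_hasDerivAt {n : ℕ} {l : ℝ} {X : ℕ → ℝ → ℝ}
    (hX : ∀ s ξ, HasDerivAt (X s) (l * X s ξ + X (s + 1) ξ) ξ)
    (hvanish : ∀ s ξ, n ≤ s → X s ξ = 0) (s : ℕ) (ξ : ℝ) :
    X s ξ = Real.exp (l * ξ) * ∑ j ∈ range (n - s), ξ ^ j / j ! * X (s + j) 0 := by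
  have hY : ∀ s ξ, HasDerivAt (fun t => Real.exp (-(l * t)) * X s t)
      (Real.exp (-(l * ξ)) * X (s + 1) ξ) ξ := by
    intro s ξ
    refine (((hasDerivAt_id' ξ).const_mul l).fun_neg.exp.fun_mul (hX s ξ)).congr_deriv ?_
    ring
  have h := eq_sum_of_hasDerivAt_succ (n := n) hY (fun s ξ hs => by simp [hvanish s ξ hs]) s ξ
  simp only [mul_zero, neg_zero, Real.exp_zero, one_mul] at h
  rw [← h, ← mul_assoc, ← Real.exp_add, add_neg_cancel, Real.exp_zero, one_mul]

/-- A symmetric differentiable matrix function `g` with `g' = J_n(λ) g` is a Hankel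
matrix whose antidiagonal entries are `X_i(ξ) = e^{λξ} ∑_{j=0}^{n−i} ξ^j/j! C_{i+j}`. -/
theorem symm_sol_jordanCell_ode (n : ℕ) (l : ℝ)
    (g : ℝ → Matrix (Fin n) (Fin n) ℝ)
    (hsymm : ∀ ξ : ℝ, (g ξ).transpose = g ξ)
    (hode : ∀ (ξ : ℝ) (i j : Fin n),
      HasDerivAt (fun t => g t i j) ((JordanCell n l * g ξ) i j) ξ) :
    ∃ C : ℕ → ℝ, ∀ (ξ : ℝ) (k m : Fin n),
      if (k : ℕ) + (m : ℕ) < n then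
        g ξ k m = Real.exp (l * ξ) *
          ∑ j ∈ Finset.range (n - ((k : ℕ) + (m : ℕ))),
            ξ ^ j / (Nat.factorial j) * C ((k : ℕ) + (m : ℕ) + j)
      else g ξ k m = 0 := by
  have hankel : ∀ ξ i j, (g ξ).natEntry i j = (g ξ).natEntry 0 (i + j) := fun ξ =>
    apply_eq_apply_zero_add <|
      natEntry_succ_left_eq_succ_right (hsymm ξ) (isSymm_of_hasDerivAt hsymm (hode ξ))
  have hX : ∀ s ξ, HasDerivAt (fun t => (g t).natEntry 0 s)
      (l * (g ξ).natEntry 0 s + (g ξ).natEntry 0 (s + 1)) ξ := by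
    intro s ξ
    simpa only [natEntry_jordanCell_mul, hankel ξ 1 s, add_comm 1 s] using
      hasDerivAt_natEntry (hode ξ) 0 s
  refine ⟨fun s => (g 0).natEntry 0 s, fun ξ k m => ?_⟩
  rw [← natEntry_val (g ξ) k m, hankel]
  split_ifs with h
  · exact eq_exp_mul_sum_of_hasDerivAt hX (fun s ξ hs => natEntry_of_le_right _ _ hs) _ ξ
  · exact natEntry_of_le_right _ _ (not_lt.1 h)
end

section
/- Let J_m(Λ) and J_n(Λ) be block Jordan matrices of sizes 2m×2m and 2n×2n with m < n built from the same 2×2 block Λ = [[α,−β],[β,α]], β > 0. A 2m×2n real matrix X satisfies J_m(Λ)·X = X·J_n(Λ)ᵀ if and only if X = [Y 0] where Y is a 2m×2m matrix satisfying J_m(Λ)·Y = Y·J_m(Λ)ᵀ (the last 2(n−m) columns of X vanish). -/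
open Matrix

/-- The `2k × 2k` block Jordan matrix with diagonal blocks `Λ` and superdiagonal
blocks `I₂`, indexed by `Fin k × Fin 2`. -/
def JordanBlockL (k : ℕ) (Λ : Matrix (Fin 2) (Fin 2) ℝ) :
    Matrix (Fin k × Fin 2) (Fin k × Fin 2) ℝ :=
  Matrix.of fun p q =>
    if p.1 = q.1 then Λ p.2 q.2
    else if (p.1 : ℕ) + 1 = (q.1 : ℕ) then (if p.2 = q.2 then 1 else 0) else 0

namespace IJAux

lemma ring_cube {R : Type*} [Ring R] (j m : R) (hj : j * j = -1) :
    j * (j * (j*m + m*j) + (j*m + m*j) * j) + (j * (j*m + m*j) + (j*m + m*j) * j) * j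
      = -((j*m + m*j) + (j*m + m*j) + (j*m + m*j) + (j*m + m*j)) := by
  have h1 : j * (j * (j*m + m*j) + (j*m + m*j) * j) + (j * (j*m + m*j) + (j*m + m*j) * j) * j
      = (j*j)*(j*m + m*j) + (j*m + m*j)*(j*j)
        + ((j*j)*(m*j) + (j*m)*(j*j)) + ((j*j)*(m*j) + (j*m)*(j*j)) := by
    noncomm_ring
  rw [h1, hj]
  noncomm_ring

def J2 : Matrix (Fin 2) (Fin 2) ℝ := !![0, -1; 1, 0]

lemma J2_sq : J2 * J2 = -1 := by
  ext a b
  fin_cases a <;> fin_cases b <;>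
    simp [J2, Matrix.mul_apply, Fin.sum_univ_two, Fin.mk_zero, Fin.mk_one]

def Sop (M : Matrix (Fin 2) (Fin 2) ℝ) : Matrix (Fin 2) (Fin 2) ℝ := J2 * M + M * J2

lemma Sop_zero : Sop 0 = 0 := by simp [Sop]

lemma Sop_smul (r : ℝ) (M : Matrix (Fin 2) (Fin 2) ℝ) : Sop (r • M) = r • Sop M := by
  simp [Sop, mul_smul_comm, smul_mul_assoc, smul_add]

lemma Sop_sub (M N : Matrix (Fin 2) (Fin 2) ℝ) : Sop (M - N) = Sop M - Sop N := by
  simp [Sop, mul_sub, sub_mul]; abel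

lemma Sop_cube (M : Matrix (Fin 2) (Fin 2) ℝ) : Sop (Sop (Sop M)) = (-4 : ℝ) • Sop M := by
  have h := ring_cube J2 M J2_sq
  show J2 * (J2 * (J2*M + M*J2) + (J2*M + M*J2) * J2)
      + (J2 * (J2*M + M*J2) + (J2*M + M*J2) * J2) * J2 = (-4 : ℝ) • (J2*M + M*J2)
  rw [h]
  ext a b
  simp [Matrix.add_apply, Matrix.neg_apply, Matrix.smul_apply]
  ring

lemma lam_comm (α β : ℝ) (M : Matrix (Fin 2) (Fin 2) ℝ) :
    !![α, -β; β, α] * M - M * (!![α, -β; β, α]).transpose = β • Sop M := by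
  have h2 : (!![α, -β; β, α]).transpose = α • (1 : Matrix (Fin 2) (Fin 2) ℝ) - β • J2 := by
    ext a b
    fin_cases a <;> fin_cases b <;>
      simp [J2, Matrix.one_apply, Fin.mk_zero, Fin.mk_one]
  have h1 : !![α, -β; β, α] = α • (1 : Matrix (Fin 2) (Fin 2) ℝ) + β • J2 := by
    ext a b
    fin_cases a <;> fin_cases b <;>
      simp [J2, Matrix.one_apply, Fin.mk_zero, Fin.mk_one]
  rw [h2, h1, Sop]
  simp only [add_mul, sub_mul, mul_add, mul_sub, smul_mul_assoc, mul_smul_comm,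
    one_mul, mul_one, smul_add, smul_sub]
  abel

lemma jordan_apply (k : ℕ) (Λ : Matrix (Fin 2) (Fin 2) ℝ) (p q : Fin k × Fin 2) :
    JordanBlockL k Λ p q
      = (if p.1 = q.1 then Λ p.2 q.2 else 0)
        + (if (p.1 : ℕ) + 1 = (q.1 : ℕ) then (if p.2 = q.2 then (1:ℝ) else 0) else 0) := by
  show (if p.1 = q.1 then Λ p.2 q.2
    else if (p.1 : ℕ) + 1 = (q.1 : ℕ) then (if p.2 = q.2 then (1:ℝ) else 0) else 0) = _
  rcases eq_or_ne p.1 q.1 with h | h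
  · have h' : ¬((p.1 : ℕ) + 1 = (q.1 : ℕ)) := by rw [h]; omega
    simp [h, h']
  · simp [h]

lemma mul_jordan_apply {k l : ℕ} (Λ : Matrix (Fin 2) (Fin 2) ℝ)
    (X : Matrix (Fin k × Fin 2) (Fin l × Fin 2) ℝ) (i : Fin k) (a : Fin 2)
    (j : Fin l) (b : Fin 2) :
    (JordanBlockL k Λ * X) (i, a) (j, b)
      = (∑ a', Λ a a' * X (i, a') (j, b))
        + (if h : (i : ℕ) + 1 < k then X (⟨(i : ℕ) + 1, h⟩, a) (j, b) else 0) := by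
  rw [Matrix.mul_apply, Fintype.sum_prod_type]
  have key : ∀ (i' : Fin k) (a' : Fin 2),
      JordanBlockL k Λ (i, a) (i', a') * X (i', a') (j, b)
        = (if i = i' then Λ a a' * X (i', a') (j, b) else 0)
          + (if (i : ℕ) + 1 = (i' : ℕ) then (if a = a' then X (i', a') (j, b) else 0) else 0) := by
    intro i' a'
    rw [jordan_apply]
    rcases eq_or_ne i i' with h | h
    · have h' : ¬((i : ℕ) + 1 = (i' : ℕ)) := by rw [h]; omega
      simp [h, h']
    · rcases eq_or_ne ((i : ℕ) + 1) ((i' : ℕ)) with h2 | h2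
      · rcases eq_or_ne a a' with h3 | h3 <;> simp [h, h2, h3]
      · simp [h, h2]
  simp_rw [key, Finset.sum_add_distrib]
  congr 1
  · have e : ∀ i' : Fin k,
        (∑ a', if i = i' then Λ a a' * X (i', a') (j, b) else 0)
          = if i = i' then (∑ a', Λ a a' * X (i', a') (j, b)) else 0 := by
      intro i'; split_ifs <;> simp
    simp_rw [e]
    simp [Finset.sum_ite_eq]
  · have e : ∀ i' : Fin k,
        (∑ a', if (i : ℕ) + 1 = (i' : ℕ) then (if a = a' then X (i', a') (j, b) else 0) else 0)
          = if (i : ℕ) + 1 = (i' : ℕ) then X (i', a) (j, b) else 0 := by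
      intro i'
      split_ifs with h
      · simp [Finset.sum_ite_eq]
      · simp
    simp_rw [e]
    by_cases hk : (i : ℕ) + 1 < k
    · rw [dif_pos hk,
        Finset.sum_eq_single_of_mem (⟨(i : ℕ) + 1, hk⟩ : Fin k) (Finset.mem_univ _)]
      · simp
      · intro c _ hc
        rw [if_neg]
        intro h
        exact hc (Fin.ext h.symm)
    · rw [dif_neg hk]
      apply Finset.sum_eq_zero
      intro c _
      rw [if_neg]
      intro h
      exact hk (h ▸ c.2)

lemma jordan_transpose_apply {k l : ℕ} (Λ : Matrix (Fin 2) (Fin 2) ℝ)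
    (X : Matrix (Fin k × Fin 2) (Fin l × Fin 2) ℝ) (i : Fin k) (a : Fin 2)
    (j : Fin l) (b : Fin 2) :
    (X * (JordanBlockL l Λ).transpose) (i, a) (j, b)
      = (∑ b', X (i, a) (j, b') * Λ b b')
        + (if h : (j : ℕ) + 1 < l then X (i, a) (⟨(j : ℕ) + 1, h⟩, b) else 0) := by
  rw [Matrix.mul_apply, Fintype.sum_prod_type]
  have key : ∀ (j' : Fin l) (b' : Fin 2),
      X (i, a) (j', b') * (JordanBlockL l Λ).transpose (j', b') (j, b)
        = (if j = j' then X (i, a) (j', b') * Λ b b' else 0)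
          + (if (j : ℕ) + 1 = (j' : ℕ) then (if b = b' then X (i, a) (j', b') else 0) else 0) := by
    intro j' b'
    rw [Matrix.transpose_apply, jordan_apply]
    rcases eq_or_ne j j' with h | h
    · have h' : ¬((j : ℕ) + 1 = (j' : ℕ)) := by rw [h]; omega
      simp [h, h']
    · rcases eq_or_ne ((j : ℕ) + 1) ((j' : ℕ)) with h2 | h2
      · rcases eq_or_ne b b' with h3 | h3 <;> simp [h, h2, h3]
      · simp [h, h2]
  simp_rw [key, Finset.sum_add_distrib]
  congr 1
  · have e : ∀ j' : Fin l,
        (∑ b', if j = j' then X (i, a) (j', b') * Λ b b' else 0)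
          = if j = j' then (∑ b', X (i, a) (j', b') * Λ b b') else 0 := by
      intro j'; split_ifs <;> simp
    simp_rw [e]
    simp [Finset.sum_ite_eq]
  · have e : ∀ j' : Fin l,
        (∑ b', if (j : ℕ) + 1 = (j' : ℕ) then (if b = b' then X (i, a) (j', b') else 0) else 0)
          = if (j : ℕ) + 1 = (j' : ℕ) then X (i, a) (j', b) else 0 := by
      intro j'
      split_ifs with h
      · simp [Finset.sum_ite_eq]
      · simp
    simp_rw [e]
    by_cases hl : (j : ℕ) + 1 < l
    · rw [dif_pos hl,
        Finset.sum_eq_single_of_mem (⟨(j : ℕ) + 1, hl⟩ : Fin l) (Finset.mem_univ _)]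
      · simp
      · intro c _ hc
        rw [if_neg]
        intro h
        exact hc (Fin.ext h.symm)
    · rw [dif_neg hl]
      apply Finset.sum_eq_zero
      intro c _
      rw [if_neg]
      intro h
      exact hl (h ▸ c.2)

variable {k l : ℕ}

def blkE (X : Matrix (Fin k × Fin 2) (Fin l × Fin 2) ℝ) (i j : ℕ) :
    Matrix (Fin 2) (Fin 2) ℝ :=
  if h : i < k ∧ j < l then Matrix.of (fun a b => X (⟨i, h.1⟩, a) (⟨j, h.2⟩, b)) else 0

lemma blkE_apply (X : Matrix (Fin k × Fin 2) (Fin l × Fin 2) ℝ) {i j : ℕ}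
    (hi : i < k) (hj : j < l) (a b : Fin 2) :
    blkE X i j a b = X (⟨i, hi⟩, a) (⟨j, hj⟩, b) := by
  rw [blkE, dif_pos ⟨hi, hj⟩]; rfl

lemma blkE_zero_left (X : Matrix (Fin k × Fin 2) (Fin l × Fin 2) ℝ) {i : ℕ} (j : ℕ)
    (hi : ¬ i < k) : blkE X i j = 0 := by
  rw [blkE, dif_neg]; tauto

lemma blkE_zero_right (X : Matrix (Fin k × Fin 2) (Fin l × Fin 2) ℝ) (i : ℕ) {j : ℕ}
    (hj : ¬ j < l) : blkE X i j = 0 := by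
  rw [blkE, dif_neg]; tauto

lemma blockify (Λ : Matrix (Fin 2) (Fin 2) ℝ)
    (X : Matrix (Fin k × Fin 2) (Fin l × Fin 2) ℝ) :
    JordanBlockL k Λ * X = X * (JordanBlockL l Λ).transpose ↔
      ∀ i j : ℕ, Λ * blkE X i j - blkE X i j * Λ.transpose
        = blkE X i (j + 1) - blkE X (i + 1) j := by
  constructor
  · intro H i j
    by_cases hi : i < k
    · by_cases hj : j < l
      · ext a b
        have hE := congrFun (congrFun H (⟨i, hi⟩, a)) (⟨j, hj⟩, b)
        rw [mul_jordan_apply, jordan_transpose_apply] at hE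
        simp only [Matrix.sub_apply, Matrix.mul_apply, Fin.sum_univ_two,
          Matrix.transpose_apply]
        simp only [Fin.sum_univ_two] at hE
        rw [blkE_apply X hi hj, blkE_apply X hi hj, blkE_apply X hi hj, blkE_apply X hi hj]
        by_cases hj1 : j + 1 < l
        · rw [show blkE X i (j+1) a b = X (⟨i, hi⟩, a) (⟨j+1, hj1⟩, b) from
            blkE_apply X hi hj1 a b]
          rw [dif_pos hj1] at hE
          by_cases hi1 : i + 1 < k
          · rw [show blkE X (i+1) j a b = X (⟨i+1, hi1⟩, a) (⟨j, hj⟩, b) from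
              blkE_apply X hi1 hj a b]
            rw [dif_pos hi1] at hE
            linarith
          · rw [blkE_zero_left X j hi1]
            rw [dif_neg hi1] at hE
            simp only [Matrix.zero_apply]
            linarith
        · rw [blkE_zero_right X i hj1]
          rw [dif_neg hj1] at hE
          by_cases hi1 : i + 1 < k
          · rw [show blkE X (i+1) j a b = X (⟨i+1, hi1⟩, a) (⟨j, hj⟩, b) from
              blkE_apply X hi1 hj a b]
            rw [dif_pos hi1] at hE
            simp only [Matrix.zero_apply]
            linarith
          · rw [blkE_zero_left X j hi1]
            rw [dif_neg hi1] at hE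
            simp only [Matrix.zero_apply]
            linarith
      · rw [blkE_zero_right X i hj, blkE_zero_right X i (show ¬ j + 1 < l by omega),
          blkE_zero_right X (i+1) hj]
        simp
    · rw [blkE_zero_left X j hi, blkE_zero_left X (j+1) hi,
        blkE_zero_left X j (show ¬ i + 1 < k by omega)]
      simp
  · intro H
    ext ⟨⟨i, hi⟩, a⟩ ⟨⟨j, hj⟩, b⟩
    rw [mul_jordan_apply, jordan_transpose_apply]
    have hE := congrFun (congrFun (H i j) a) b
    simp only [Matrix.sub_apply, Matrix.mul_apply, Fin.sum_univ_two,
      Matrix.transpose_apply] at hE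
    rw [blkE_apply X hi hj, blkE_apply X hi hj, blkE_apply X hi hj, blkE_apply X hi hj] at hE
    simp only [Fin.sum_univ_two]
    by_cases hj1 : j + 1 < l
    · rw [dif_pos hj1]
      rw [show blkE X i (j+1) a b = X (⟨i, hi⟩, a) (⟨j+1, hj1⟩, b) from
        blkE_apply X hi hj1 a b] at hE
      by_cases hi1 : i + 1 < k
      · rw [dif_pos hi1]
        rw [show blkE X (i+1) j a b = X (⟨i+1, hi1⟩, a) (⟨j, hj⟩, b) from
          blkE_apply X hi1 hj a b] at hE
        linarith
      · rw [dif_neg hi1]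
        rw [blkE_zero_left X j hi1] at hE
        simp only [Matrix.zero_apply] at hE
        linarith
    · rw [dif_neg hj1]
      rw [blkE_zero_right X i hj1] at hE
      simp only [Matrix.zero_apply] at hE
      by_cases hi1 : i + 1 < k
      · rw [dif_pos hi1]
        rw [show blkE X (i+1) j a b = X (⟨i+1, hi1⟩, a) (⟨j, hj⟩, b) from
          blkE_apply X hi1 hj a b] at hE
        linarith
      · rw [dif_neg hi1]
        rw [blkE_zero_left X j hi1] at hE
        simp only [Matrix.zero_apply] at hE
        linarith

end IJAux

open IJAux

/-- For `m < n`, a `2m × 2n` matrix `X` satisfies `J_m(Λ) X = X J_n(Λ)ᵀ` iff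
`X = [Y 0]` with `Y` a `2m × 2m` matrix intertwining `J_m(Λ)`. -/
theorem intertwine_rect_jordanBlockL_lt (m n : ℕ) (hm : 0 < m) (hmn : m < n)
    (α β : ℝ) (hβ : 0 < β)
    (X : Matrix (Fin m × Fin 2) (Fin n × Fin 2) ℝ) :
    JordanBlockL m !![α, -β; β, α] * X =
        X * (JordanBlockL n !![α, -β; β, α]).transpose ↔
      ∃ Y : Matrix (Fin m × Fin 2) (Fin m × Fin 2) ℝ,
        JordanBlockL m !![α, -β; β, α] * Y =
          Y * (JordanBlockL m !![α, -β; β, α]).transpose ∧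
        ∀ (p : Fin m × Fin 2) (q : Fin n × Fin 2),
          if h : (q.1 : ℕ) < m then X p q = Y p (⟨(q.1 : ℕ), h⟩, q.2)
          else X p q = 0 := by
  constructor
  · intro H
    have Hb := (blockify !![α, -β; β, α] X).1 H
    have Hs : ∀ i j : ℕ, β • Sop (blkE X i j) = blkE X i (j+1) - blkE X (i+1) j := by
      intro i j
      rw [← lam_comm]
      exact Hb i j
    -- Step A : Sop of every block vanishes
    have hS : ∀ d i j : ℕ, m + n ≤ i + j + d → Sop (blkE X i j) = 0 := by
      intro d
      induction d with
      | zero =>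
        intro i j h
        rcases (show ¬ i < m ∨ ¬ j < n by omega) with h' | h'
        · rw [blkE_zero_left X j h', Sop_zero]
        · rw [blkE_zero_right X i h', Sop_zero]
      | succ d ih =>
        intro i j h
        have h1 : Sop (blkE X i (j+1)) = 0 := ih i (j+1) (by omega)
        have h2 : Sop (blkE X (i+1) j) = 0 := ih (i+1) j (by omega)
        have e0 := congrArg Sop (congrArg Sop (Hs i j))
        rw [Sop_smul, Sop_smul, Sop_cube, Sop_sub, h1, h2, sub_zero, Sop_zero] at e0
        rcases smul_eq_zero.mp e0 with h' | h'
        · exact absurd h' (ne_of_gt hβ)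
        · rcases smul_eq_zero.mp h' with h'' | h''
          · norm_num at h''
          · exact h''
    have hS0 : ∀ i j : ℕ, Sop (blkE X i j) = 0 := fun i j => hS (m+n) i j (by omega)
    -- Step B : shift relation
    have Hshift : ∀ i j : ℕ, blkE X i (j+1) = blkE X (i+1) j := by
      intro i j
      have := Hs i j
      rw [hS0 i j, smul_zero] at this
      exact sub_eq_zero.mp this.symm
    -- Step C : constancy along antidiagonals
    have Hdiag : ∀ j i : ℕ, blkE X i j = blkE X (i+j) 0 := by
      intro j
      induction j with
      | zero => intro i; rfl
      | succ j ih =>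
        intro i
        rw [Hshift i j, ih (i+1), show i+1+j = i+(j+1) from by omega]
    -- Step D : vanishing for i + j ≥ m
    have Hvan : ∀ i j : ℕ, m ≤ i + j → blkE X i j = 0 := by
      intro i j h
      rw [Hdiag j i]
      exact blkE_zero_left X 0 (by omega)
    refine ⟨fun p q => X p (⟨(q.1 : ℕ), lt_trans q.1.2 hmn⟩, q.2), ?_, ?_⟩
    · set Y : Matrix (Fin m × Fin 2) (Fin m × Fin 2) ℝ :=
        fun p q => X p (⟨(q.1 : ℕ), lt_trans q.1.2 hmn⟩, q.2) with hYdef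
      rw [blockify]
      have hYX : ∀ i j : ℕ, blkE Y i j = if i + j < m then blkE X i j else 0 := by
        intro i j
        by_cases hij : i < m ∧ j < m
        · have hYB : blkE Y i j = blkE X i j := by
            ext a b
            rw [blkE_apply Y hij.1 hij.2, blkE_apply X hij.1 (lt_trans hij.2 hmn)]
          rw [hYB]
          split_ifs with h
          · rfl
          · exact Hvan i j (by omega)
        · rw [show blkE Y i j = 0 from by rw [blkE, dif_neg hij], if_neg (by omega)]
      intro i j
      rw [hYX, hYX, hYX]
      have hlhs : !![α, -β; β, α] * (if i+j < m then blkE X i j else 0)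
          - (if i+j < m then blkE X i j else 0) * (!![α, -β; β, α]).transpose = 0 := by
        split_ifs with h
        · rw [lam_comm, hS0 i j, smul_zero]
        · rw [lam_comm, Sop_zero, smul_zero]
      rw [hlhs, show i+(j+1) = i+1+j from by omega]
      split_ifs with h
      · rw [Hshift i j, sub_self]
      · rw [sub_self]
    · intro p q
      by_cases h : (q.1 : ℕ) < m
      · rw [dif_pos h]
      · rw [dif_neg h]
        obtain ⟨⟨i, hi⟩, a⟩ := p
        obtain ⟨⟨j, hj⟩, b⟩ := q
        have hv := congrFun (congrFun (Hvan i j (by simp at h; omega)) a) b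
        rw [blkE_apply X hi hj] at hv
        simpa using hv
  · rintro ⟨Y, hY, hXY⟩
    have hB : ∀ i j : ℕ, blkE X i j = blkE Y i j := by
      intro i j
      by_cases hij : i < m ∧ j < n
      · by_cases hjm : j < m
        · ext a b
          rw [blkE_apply X hij.1 hij.2, blkE_apply Y hij.1 hjm]
          have := hXY (⟨i, hij.1⟩, a) (⟨j, hij.2⟩, b)
          rw [dif_pos (show ((⟨j, hij.2⟩ : Fin n) : ℕ) < m from hjm)] at this
          exact this
        · ext a b
          rw [blkE_apply X hij.1 hij.2, blkE_zero_right Y i hjm]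
          have := hXY (⟨i, hij.1⟩, a) (⟨j, hij.2⟩, b)
          rw [dif_neg hjm] at this
          simpa using this
      · rcases not_and_or.mp hij with h | h
        · rw [blkE_zero_left X j h, blkE_zero_left Y j h]
        · rw [blkE_zero_right X i h, blkE_zero_right Y i (show ¬ j < m by omega)]
    rw [blockify]
    intro i j
    rw [hB, hB, hB]
    exact (blockify !![α, -β; β, α] Y).1 hY i j
end
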